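/- For all real numbers a, b with τ > 0 and setting d = (a - b)/τ, one has the convex-splitting inequality (a³ - b)(a - b) ≥ (1/4)[(a² - 1)² - (b² - 1)²], i.e. the implicit-convex/explicit-concave splitting of the double-well potential F(x) = (1/4)(x²-1)² satisfies F(a) - F(b) ≤ (a³ - b)(a - b). -/
import Mathlib

theorem stmt_16 (F : ℝ → ℝ) (hF : ∀ x, F x = (1/4) * (x^2 - 1)^2) :
    ∀ a b : ℝ, F a - F b ≤ (a^3 - b) * (a - b) := by
  intro a b
  rw [hF, hF]
  nlinarith [sq_nonneg (a-b), sq_nonneg (a+b), sq_nonneg (a^2-b^2), sq_nonneg (a^2+a*b+b^2), sq_nonneg ((a-b)*(a+b)), sq_nonneg (a*b-1), sq_nonneg (a^2-1), sq_nonneg (b^2-1)]
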